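/- In the setting of Lemma 4.1's construction, let j ≥ 0 with m_{k−1} ≤ j < m_k and suppose γ(j+1) ≤ ε where ε ∈ (0, 1/(2M²χ²)). Then for every branch I of H_j and every branch I' of H_{j+1} with I' ⊂ I, |I'|/|I| ≥ (1 − 2χ²M²ε)/(2χM²). -/

import Mathlib

open Set Filter Metric

noncomputable section

/-- A word `σ = σ₁⋯σ_k` is valid for the branching sequence `n` if `1 ≤ σ_j ≤ n j`
for every `1 ≤ j ≤ k`.  Words are represented as lists (read with 1-based indices). -/
def ValidWord (n : ℕ → ℕ) (σ : List ℕ) : Prop :=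
  ∀ j, j < σ.length → 1 ≤ σ.getD j 0 ∧ σ.getD j 0 ≤ n (j + 1)

/-- The conditions (1)–(4) of Definition 2.1: the family of closed intervals
`I_σ = [a σ, b σ]` (for `σ ∈ D`) has homogeneous perfect structure with parameters
`n`, `c`, `ξ`. -/
structure HPStruct (n : ℕ → ℕ) (c : ℕ → ℝ) (ξ : ℕ → ℕ → ℝ) (a b : List ℕ → ℝ) : Prop where
  /-- each `I_{σ*j}` is a subinterval of `I_σ` -/
  sub : ∀ σ : List ℕ, ValidWord n σ → ∀ j, 1 ≤ j → j ≤ n (σ.length + 1) →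
    Set.Icc (a (σ ++ [j])) (b (σ ++ [j])) ⊆ Set.Icc (a σ) (b σ)
  /-- `min I_{σ*(l+1)} ≥ max I_{σ*l}` -/
  ord : ∀ σ : List ℕ, ValidWord n σ → ∀ l, 1 ≤ l → l + 1 ≤ n (σ.length + 1) →
    b (σ ++ [l]) ≤ a (σ ++ [l + 1])
  /-- `|I_{σ*j}| / |I_σ| = c_k` -/
  ratio : ∀ σ : List ℕ, ValidWord n σ → ∀ j, 1 ≤ j → j ≤ n (σ.length + 1) →
    b (σ ++ [j]) - a (σ ++ [j]) = c (σ.length + 1) * (b σ - a σ)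
  /-- `min I_{σ*1} - min I_σ = ξ_{k,0}` -/
  gap0 : ∀ σ : List ℕ, ValidWord n σ → a (σ ++ [1]) - a σ = ξ (σ.length + 1) 0
  /-- `min I_{σ*(l+1)} - max I_{σ*l} = ξ_{k,l}` -/
  gapl : ∀ σ : List ℕ, ValidWord n σ → ∀ l, 1 ≤ l → l + 1 ≤ n (σ.length + 1) →
    a (σ ++ [l + 1]) - b (σ ++ [l]) = ξ (σ.length + 1) l
  /-- `max I_σ - max I_{σ*n_k} = ξ_{k,n_k}` -/
  gapn : ∀ σ : List ℕ, ValidWord n σ → b σ - b (σ ++ [n (σ.length + 1)]) =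
    ξ (σ.length + 1) (n (σ.length + 1))

/-- A homogeneous perfect set datum `E(I₀, {n_k}, {c_k}, {ξ_{k,l}})` of Definition 2.1:
a nondegenerate initial closed interval `I₀ = [a ∅, b ∅]`, integers `n_k ≥ 2`,
ratios `c_k > 0` with `n_k c_k < 1`, nonnegative gaps `ξ_{k,l}` (`0 ≤ l ≤ n_k`), and a
family of closed intervals `I_σ = [a σ, b σ]` with homogeneous perfect structure. -/
structure HPS where
  n : ℕ → ℕ
  c : ℕ → ℝ
  ξ : ℕ → ℕ → ℝ
  a : List ℕ → ℝ
  b : List ℕ → ℝ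
  hn : ∀ k, 1 ≤ k → 2 ≤ n k
  hc : ∀ k, 1 ≤ k → 0 < c k
  hnc : ∀ k, 1 ≤ k → (n k : ℝ) * c k < 1
  hξ : ∀ k, 1 ≤ k → ∀ l, l ≤ n k → 0 ≤ ξ k l
  hab : a [] < b []
  struct : HPStruct n c ξ a b

namespace HPS

variable (S : HPS)

/-- `E_k`, the union of the `k`-order basic intervals. -/
def Ek (k : ℕ) : Set ℝ :=
  ⋃ σ ∈ {σ : List ℕ | σ.length = k ∧ ValidWord S.n σ}, Set.Icc (S.a σ) (S.b σ)

/-- The homogeneous perfect set `E = ⋂_k E_k`. -/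
def E : Set ℝ := ⋂ k, S.Ek k

/-- Left endpoint of the trimmed interval `I_σ*` (for `σ ∈ D_k`):
`min I_σ* - min I_σ = ξ_{k+1,0}`. -/
def aStar (σ : List ℕ) : ℝ := S.a σ + S.ξ (σ.length + 1) 0

/-- Right endpoint of the trimmed interval `I_σ*`:
`max I_σ - max I_σ* = ξ_{k+1,n_{k+1}}`. -/
def bStar (σ : List ℕ) : ℝ := S.b σ - S.ξ (σ.length + 1) (S.n (σ.length + 1))

/-- `E_k* = ⋃_{σ ∈ D_k} I_σ*`. -/
def EkStar (k : ℕ) : Set ℝ :=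
  ⋃ σ ∈ {σ : List ℕ | σ.length = k ∧ ValidWord S.n σ}, Set.Icc (S.aStar σ) (S.bStar σ)

/-- `δ_k = |I_σ*|` for `σ ∈ D_k` (this common value is computed on the word `1⋯1`). -/
def delta (k : ℕ) : ℝ :=
  S.bStar (List.replicate k 1) - S.aStar (List.replicate k 1)

/-- `c_k* = δ_k / δ_{k-1}`. -/
def cStar (k : ℕ) : ℝ := S.delta k / S.delta (k - 1)

/-- `δ_k* = δ₀ c₁* ⋯ c_k*`. -/
def deltaStar (k : ℕ) : ℝ := S.delta 0 * ∏ j ∈ Finset.Icc 1 k, S.cStar j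

/-- `N_k* = n₁* ⋯ n_k* = n₁ ⋯ n_k`. -/
def Nstar (k : ℕ) : ℕ := ∏ j ∈ Finset.Icc 1 k, S.n j

/-- The reconstructed gap parameters: `ξ*_{k,l} = ξ_{k,l} + ξ_{k+1,0} + ξ_{k+1,n_{k+1}}`
for `1 ≤ l ≤ n_k - 1`, `ξ*_{k,0} = ξ_{k+1,0}`, `ξ*_{k,n_k} = ξ_{k+1,n_{k+1}}`. -/
def xiStar (k l : ℕ) : ℝ :=
  if l = 0 then S.ξ (k + 1) 0
  else if l = S.n k then S.ξ (k + 1) (S.n (k + 1))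
  else S.ξ k l + S.ξ (k + 1) 0 + S.ξ (k + 1) (S.n (k + 1))

/-- `α̲*_k = min_{1 ≤ l ≤ n_k - 1} ξ*_{k,l}`. -/
def alphaLo (k : ℕ) : ℝ := sInf ((fun l => S.xiStar k l) '' Set.Icc 1 (S.n k - 1))

/-- `α̅*_k = max_{1 ≤ l ≤ n_k - 1} ξ*_{k,l}`. -/
def alphaHi (k : ℕ) : ℝ := sSup ((fun l => S.xiStar k l) '' Set.Icc 1 (S.n k - 1))

end HPS

/-- The gap-comparability condition: `max_{1≤l≤n_k-1} ξ_{k,l} ≤ χ · min_{1≤l≤n_k-1} ξ_{k,l}`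
for every `k ≥ 1`. -/
def GapComparable (S : HPS) (χ : ℝ) : Prop :=
  ∀ k, 1 ≤ k → ∀ l l', 1 ≤ l → l ≤ S.n k - 1 → 1 ≤ l' → l' ≤ S.n k - 1 →
    S.ξ k l ≤ χ * S.ξ k l'

/-- `M = ⌊2χ⌋ + 1`. -/
def Mconst (χ : ℝ) : ℕ := ⌊2 * χ⌋₊ + 1

/-- `i_k`: equal to `1` if `n_k < M`, and otherwise the integer with `M^{i_k} ≤ n_k < M^{i_k+1}`. -/
def HPS.ik (S : HPS) (χ : ℝ) (k : ℕ) : ℕ := max 1 (Nat.log (Mconst χ) (S.n k))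

/-- `m_k = i₁ + ⋯ + i_k` (with `m₀ = 0`). -/
def HPS.mIdx (S : HPS) (χ : ℝ) (k : ℕ) : ℕ := ∑ l ∈ Finset.Icc 1 k, S.ik χ l

/-- For `m ≥ 1`, the index `k` with `m_{k-1} < m ≤ m_k`. -/
def HPS.kOf (S : HPS) (χ : ℝ) (m : ℕ) : ℕ := sInf {k | m ≤ S.mIdx χ k}

/-- The data of the sequence `{H_m}` constructed in Lemma 4.1, with its characterizing
properties.  `Br m` is the finite set of branches of `H_m`, a branch being recorded by its
endpoints, and `H_m = ⋃_{p ∈ Br m} [p.1, p.2]`. -/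
structure BranchSeq (S : HPS) (χ : ℝ) where
  Br : ℕ → Finset (ℝ × ℝ)
  /-- each `H_m` has at least one branch -/
  nonempty : ∀ m, (Br m).Nonempty
  /-- branches are nondegenerate closed intervals -/
  lt : ∀ m, ∀ p ∈ Br m, p.1 < p.2
  /-- distinct branches of `H_m` have disjoint interiors -/
  disj : ∀ m, ∀ p ∈ Br m, ∀ q ∈ Br m, p ≠ q →
    Set.Ioo p.1 p.2 ∩ Set.Ioo q.1 q.2 = ∅
  /-- the sequence `H_m` is decreasing under inclusion -/
  dec : ∀ m, (⋃ p ∈ Br (m + 1), Set.Icc p.1 p.2) ⊆ ⋃ p ∈ Br m, Set.Icc p.1 p.2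
  /-- every branch of `H_{m+1}` is contained in a branch of `H_m` -/
  nested : ∀ m, ∀ q ∈ Br (m + 1), ∃ p ∈ Br m, Set.Icc q.1 q.2 ⊆ Set.Icc p.1 p.2
  /-- `E = ⋂_m H_m` -/
  interE : S.E = ⋂ m, ⋃ p ∈ Br m, Set.Icc p.1 p.2
  /-- `H_{m_k} = E_k*`, the branches being exactly the intervals `I_σ*`, `σ ∈ D_k` -/
  levels : ∀ k, (Br (S.mIdx χ k) : Set (ℝ × ℝ)) =
    {p : ℝ × ℝ | ∃ σ : List ℕ, σ.length = k ∧ ValidWord S.n σ ∧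
      p = (S.aStar σ, S.bStar σ)}
  /-- each branch of `H_m` contains at most `M²` branches of `H_{m+1}` -/
  card_le : ∀ m, ∀ p ∈ Br m,
    {q ∈ (Br (m + 1) : Set (ℝ × ℝ)) | Set.Icc q.1 q.2 ⊆ Set.Icc p.1 p.2}.ncard ≤
      (Mconst χ) ^ 2
  /-- for `m_{k-1} < m < m_k`, each branch of `H_{m-1}` contains exactly `M` branches of `H_m` -/
  exactM : ∀ k, 1 ≤ k → ∀ m, S.mIdx χ (k - 1) < m → m < S.mIdx χ k →
    ∀ p ∈ Br (m - 1),
      {q ∈ (Br m : Set (ℝ × ℝ)) | Set.Icc q.1 q.2 ⊆ Set.Icc p.1 p.2}.ncard = Mconst χ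
  /-- for `m_{k-1} < m < m_k`, each branch of `H_m` is the convex hull of a block of
  consecutive intervals `I_σ*`, `σ ∈ D_k`: its endpoints are endpoints of such intervals -/
  hull : ∀ k, 1 ≤ k → ∀ m, S.mIdx χ (k - 1) < m → m < S.mIdx χ k →
    ∀ p ∈ Br m, ∃ σ τ : List ℕ, σ.length = k ∧ τ.length = k ∧
      ValidWord S.n σ ∧ ValidWord S.n τ ∧ p.1 = S.aStar σ ∧ p.2 = S.bStar τ
  /-- `max_{I ∈ H_m} |I| ≤ 2χ · min_{I ∈ H_m} |I|` -/
  comparable : ∀ m, ∀ p ∈ Br m, ∀ q ∈ Br m, p.2 - p.1 ≤ 2 * χ * (q.2 - q.1)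

namespace BranchSeq

variable {S : HPS} {χ : ℝ} (B : BranchSeq S χ)

/-- `l(H_m)`, the total length of the branches of `H_m`. -/
def len (m : ℕ) : ℝ := ∑ p ∈ B.Br m, (p.2 - p.1)

/-- `max_{I branch of H_m} |I|`. -/
def maxLen (m : ℕ) : ℝ :=
  sSup ((fun p : ℝ × ℝ => p.2 - p.1) '' (B.Br m : Set (ℝ × ℝ)))

/-- `min_{I branch of H_m} |I|`. -/
def minLen (m : ℕ) : ℝ :=
  sInf ((fun p : ℝ × ℝ => p.2 - p.1) '' (B.Br m : Set (ℝ × ℝ)))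

/-- `Λ(m) = max {|J|/|I| : I branch of H_{m-1}, J branch of H_m, J ⊆ I}`. -/
def Lam (m : ℕ) : ℝ :=
  sSup {r : ℝ | ∃ p ∈ B.Br (m - 1), ∃ q ∈ B.Br m,
    Set.Icc q.1 q.2 ⊆ Set.Icc p.1 p.2 ∧ r = (q.2 - q.1) / (p.2 - p.1)}

/-- `λ(m) = min {|J|/|I| : I branch of H_{m-1}, J branch of H_m, J ⊆ I}`. -/
def lamSmall (m : ℕ) : ℝ :=
  sInf {r : ℝ | ∃ p ∈ B.Br (m - 1), ∃ q ∈ B.Br m,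
    Set.Icc q.1 q.2 ⊆ Set.Icc p.1 p.2 ∧ r = (q.2 - q.1) / (p.2 - p.1)}

/-- `γ(m) = α̲*_k / max_{I branch of H_{m-1}} |I|`, where `m_{k-1} < m ≤ m_k`. -/
def gam (m : ℕ) : ℝ := S.alphaLo (S.kOf χ m) / B.maxLen (m - 1)

/-- `Γ(m) = α̅*_k / min_{I branch of H_{m-1}} |I|`, where `m_{k-1} < m ≤ m_k`. -/
def Gam (m : ℕ) : ℝ := S.alphaHi (S.kOf χ m) / B.minLen (m - 1)

open Classical in
/-- `S_ε(m) = {j : 1 ≤ j ≤ m, γ(j) ≤ ε}`. -/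
def Sfin (ε : ℝ) (m : ℕ) : Finset ℕ := (Finset.Icc 1 m).filter (fun j => B.gam j ≤ ε)

open Classical in
/-- The branches of `H_{m+1}` contained in the branch `p` of `H_m`. -/
def children (m : ℕ) (p : ℝ × ℝ) : Finset (ℝ × ℝ) :=
  (B.Br (m + 1)).filter (fun q => p.1 ≤ q.1 ∧ q.2 ≤ p.2)

end BranchSeq

section Helpers

namespace HPS

variable (S : HPS)

lemma valid_of_append {σ : List ℕ} {i : ℕ} (h : ValidWord S.n (σ ++ [i])) :
    ValidWord S.n σ ∧ 1 ≤ i ∧ i ≤ S.n (σ.length + 1) := by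
  constructor
  · intro j hj
    have h2 : j < (σ ++ [i]).length := by simp; omega
    have := h j h2
    rwa [List.getD_append _ _ _ _ hj] at this
  · have h2 : σ.length < (σ ++ [i]).length := by simp
    have := h σ.length h2
    rwa [List.getD_append_right _ _ _ _ le_rfl, Nat.sub_self] at this

lemma valid_append {σ : List ℕ} (h : ValidWord S.n σ) {i : ℕ} (h1 : 1 ≤ i)
    (h2 : i ≤ S.n (σ.length + 1)) : ValidWord S.n (σ ++ [i]) := by
  intro j hj
  simp only [List.length_append, List.length_singleton] at hj
  rcases lt_or_ge j σ.length with hlt | hge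
  · rw [List.getD_append _ _ _ _ hlt]; exact h j hlt
  · have hje : j = σ.length := by omega
    subst hje
    rw [List.getD_append_right _ _ _ _ le_rfl, Nat.sub_self]
    exact ⟨h1, h2⟩

lemma valid_take {σ : List ℕ} (h : ValidWord S.n σ) (t : ℕ) :
    ValidWord S.n (σ.take t) := by
  intro j hj
  have hj' : j < min t σ.length := by rw [List.length_take] at hj; exact hj
  have hjσ : j < σ.length := lt_of_lt_of_le hj' (min_le_right _ _)
  have : (σ.take t).getD j 0 = σ.getD j 0 := by
    rw [List.getD_eq_getElem _ _ hj, List.getD_eq_getElem _ _ hjσ]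
    simp [List.getElem_take]
  rw [this]
  exact h j hjσ

lemma len_pos {σ : List ℕ} (h : ValidWord S.n σ) : S.a σ < S.b σ := by
  induction σ using List.reverseRecOn with
  | nil => exact S.hab
  | append_singleton w i ih =>
    obtain ⟨hw, hi1, hi2⟩ := S.valid_of_append h
    have hr := S.struct.ratio w hw i hi1 hi2
    have hc := S.hc (w.length + 1) (Nat.succ_le_succ (Nat.zero_le _))
    nlinarith [ih hw]

lemma subset_take {σ : List ℕ} (h : ValidWord S.n σ) (t : ℕ) (ht : t ≤ σ.length) :
    Set.Icc (S.a σ) (S.b σ) ⊆ Set.Icc (S.a (σ.take t)) (S.b (σ.take t)) := by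
  induction σ using List.reverseRecOn with
  | nil => simp
  | append_singleton w i ih =>
    obtain ⟨hw, hi1, hi2⟩ := S.valid_of_append h
    rcases lt_or_ge t (w.length + 1) with hlt | hge
    · have ht' : t ≤ w.length := by omega
      rw [List.take_append_of_le_length ht']
      exact (S.struct.sub w hw i hi1 hi2).trans (ih hw ht')
    · have : t = w.length + 1 := by simp at ht; omega
      subst this
      rw [List.take_of_length_le (by simp)]

lemma take_endpoints {σ : List ℕ} (h : ValidWord S.n σ) (t : ℕ) (ht : t ≤ σ.length) :
    S.a (σ.take t) ≤ S.a σ ∧ S.b σ ≤ S.b (σ.take t) := by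
  have h1 := S.subset_take h t ht ⟨le_rfl, (S.len_pos h).le⟩
  have h2 := S.subset_take h t ht ⟨(S.len_pos h).le, le_rfl⟩
  exact ⟨h1.1, h2.2⟩

lemma sibling_le {σ : List ℕ} (h : ValidWord S.n σ) {l l' : ℕ} (h1 : 1 ≤ l)
    (hll : l < l') (h2 : l' ≤ S.n (σ.length + 1)) :
    S.b (σ ++ [l]) ≤ S.a (σ ++ [l']) := by
  induction l' with
  | zero => omega
  | succ m ih =>
    rcases Nat.lt_or_ge l m with hlm | hlm
    · have hstep := S.struct.ord σ h m (by omega) h2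
      have hmid := S.len_pos (S.valid_append h (i := m) (by omega) (by omega))
      exact le_trans (le_trans (ih hlm (by omega)) hmid.le) hstep
    · have : l = m := by omega
      subst this
      exact S.struct.ord σ h l h1 h2


lemma aStar_eq {σ : List ℕ} (h : ValidWord S.n σ) : S.aStar σ = S.a (σ ++ [1]) := by
  have := S.struct.gap0 σ h
  unfold aStar; linarith

lemma bStar_eq {σ : List ℕ} (h : ValidWord S.n σ) :
    S.bStar σ = S.b (σ ++ [S.n (σ.length + 1)]) := by
  have := S.struct.gapn σ h
  unfold bStar; linarith

lemma a_le_aStar (σ : List ℕ) : S.a σ ≤ S.aStar σ := by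
  unfold aStar
  have := S.hξ (σ.length + 1) (Nat.succ_le_succ (Nat.zero_le _)) 0 (Nat.zero_le _)
  linarith

lemma bStar_le_b (σ : List ℕ) : S.bStar σ ≤ S.b σ := by
  unfold bStar
  have := S.hξ (σ.length + 1) (Nat.succ_le_succ (Nat.zero_le _))
    (S.n (σ.length + 1)) le_rfl
  linarith

lemma n_pos (k : ℕ) : 1 ≤ S.n (k + 1) :=
  le_trans (by norm_num) (S.hn (k + 1) (Nat.succ_le_succ (Nat.zero_le _)))

lemma n_two (k : ℕ) : 2 ≤ S.n (k + 1) := S.hn (k + 1) (Nat.succ_le_succ (Nat.zero_le _))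

lemma aStar_lt_bStar {σ : List ℕ} (h : ValidWord S.n σ) : S.aStar σ < S.bStar σ := by
  rw [S.aStar_eq h, S.bStar_eq h]
  have h1 : S.a (σ ++ [1]) ≤ S.b (σ ++ [1]) :=
    (S.len_pos (S.valid_append h le_rfl (S.n_pos σ.length))).le
  have h2 : S.b (σ ++ [1]) ≤ S.a (σ ++ [S.n (σ.length + 1)]) :=
    S.sibling_le h le_rfl (by have := S.n_two σ.length; omega) le_rfl
  have h3 : S.a (σ ++ [S.n (σ.length + 1)]) < S.b (σ ++ [S.n (σ.length + 1)]) :=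
    S.len_pos (S.valid_append h (S.n_pos σ.length) le_rfl)
  linarith

lemma order_of_ne {u v : List ℕ} (hu : ValidWord S.n u) (hv : ValidWord S.n v)
    (h1 : ¬ u <+: v) (h2 : ¬ v <+: u) : S.b u ≤ S.a v ∨ S.b v ≤ S.a u := by
  -- there is a first index where u and v differ
  have hex : ∃ t, t < min u.length v.length ∧ u.getD t 0 ≠ v.getD t 0 := by
    by_contra hcon
    push_neg at hcon
    have heq : ∀ t, t < min u.length v.length → u.getD t 0 = v.getD t 0 := hcon
    rcases le_total u.length v.length with hle | hle
    · apply h1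
      have : u = v.take u.length := by
        apply List.ext_getElem
        · rw [List.length_take]; omega
        · intro i hi1 hi2
          have hiu : i < u.length := hi1
          have hiv : i < v.length := by omega
          have := heq i (by omega)
          rw [List.getD_eq_getElem _ _ hiu, List.getD_eq_getElem _ _ hiv] at this
          simpa [List.getElem_take] using this
      rw [this]; exact List.take_prefix _ _
    · apply h2
      have : v = u.take v.length := by
        apply List.ext_getElem
        · rw [List.length_take]; omega
        · intro i hi1 hi2
          have hiv : i < v.length := hi1
          have hiu : i < u.length := by omega
          have := heq i (by omega)
          rw [List.getD_eq_getElem _ _ hiu, List.getD_eq_getElem _ _ hiv] at this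
          simpa [List.getElem_take] using this.symm
      rw [this]; exact List.take_prefix _ _
  classical
  set t₀ := Nat.find hex with ht₀def
  obtain ⟨ht₀, hne⟩ := Nat.find_spec hex
  have hmin : ∀ s, s < t₀ → u.getD s 0 = v.getD s 0 := by
    intro s hs
    have h := Nat.find_min hex hs
    push_neg at h
    exact h (lt_trans hs ht₀)
  have htu : t₀ < u.length := lt_of_lt_of_le ht₀ (min_le_left _ _)
  have htv : t₀ < v.length := lt_of_lt_of_le ht₀ (min_le_right _ _)
  have hw : u.take t₀ = v.take t₀ := by
    apply List.ext_getElem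
    · rw [List.length_take, List.length_take]; omega
    · intro i hi1 hi2
      rw [List.length_take] at hi1
      have hiu : i < u.length := by omega
      have hiv : i < v.length := by omega
      have := hmin i (by omega)
      rw [List.getD_eq_getElem _ _ hiu, List.getD_eq_getElem _ _ hiv] at this
      simpa [List.getElem_take] using this
  have hwlen : (u.take t₀).length = t₀ := by rw [List.length_take]; omega
  have hwv : ValidWord S.n (u.take t₀) := S.valid_take hu t₀
  set iu := u.getD t₀ 0 with hiu_def
  set iv := v.getD t₀ 0 with hiv_def
  have hu1 : u.take (t₀ + 1) = u.take t₀ ++ [iu] := by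
    rw [List.take_succ, List.getElem?_eq_getElem htu]
    rw [hiu_def, List.getD_eq_getElem _ _ htu]
    rfl
  have hv1 : v.take (t₀ + 1) = v.take t₀ ++ [iv] := by
    rw [List.take_succ, List.getElem?_eq_getElem htv]
    rw [hiv_def, List.getD_eq_getElem _ _ htv]
    rfl
  have hbu := hu t₀ htu
  have hbv := hv t₀ htv
  have heu := S.take_endpoints hu (t₀ + 1) (by omega)
  have hev := S.take_endpoints hv (t₀ + 1) (by omega)
  rw [hu1] at heu
  rw [hv1] at hev
  rcases lt_or_gt_of_ne hne with hlt | hlt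
  · left
    have hsib : S.b (u.take t₀ ++ [iu]) ≤ S.a (u.take t₀ ++ [iv]) := by
      apply S.sibling_le hwv hbu.1 hlt
      rw [hwlen]; exact hbv.2
    rw [← hw] at hev
    linarith [heu.2, hev.1]
  · right
    have hsib : S.b (v.take t₀ ++ [iv]) ≤ S.a (v.take t₀ ++ [iu]) := by
      apply S.sibling_le (S.valid_take hv t₀) hbv.1 hlt
      rw [List.length_take]
      have : min t₀ v.length = t₀ := by omega
      rw [this]; exact hbu.2
    rw [hw] at heu
    linarith [heu.1, hev.2]



lemma star_subset_prefix {u v : List ℕ} (hu : ValidWord S.n u) (hv : ValidWord S.n v)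
    (hlen : v.length ≤ u.length) (ha : S.aStar v ≤ S.aStar u) (hb : S.bStar u ≤ S.bStar v) :
    v <+: u := by
  by_contra hnp
  have hnp2 : ¬ u <+: v := by
    intro hp
    exact hnp (by
      have : u = v := hp.eq_of_length_le hlen
      rw [this])
  have hu1 := S.aStar_lt_bStar hu
  have hau := S.a_le_aStar u
  have hav := S.a_le_aStar v
  have hbu := S.bStar_le_b u
  have hbv := S.bStar_le_b v
  rcases S.order_of_ne hu hv hnp2 hnp with h | h
  · linarith
  · linarith

lemma prefix_single {ρ σ : List ℕ} (h : ρ <+: σ) (hlen : σ.length = ρ.length + 1) :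
    ∃ i, σ = ρ ++ [i] := by
  obtain ⟨t, rfl⟩ := h
  have : t.length = 1 := by simp at hlen; omega
  obtain ⟨x, rfl⟩ := List.length_eq_one_iff.mp this
  exact ⟨x, rfl⟩

lemma parent_decomp {u ρ : List ℕ} (hu : ValidWord S.n u) (hρ : ValidWord S.n ρ)
    (hlen : u.length = ρ.length + 1) (ha : S.aStar ρ ≤ S.aStar u)
    (hb : S.bStar u ≤ S.bStar ρ) :
    ∃ i, 1 ≤ i ∧ i ≤ S.n (ρ.length + 1) ∧ u = ρ ++ [i] := by
  have hp := S.star_subset_prefix hu hρ (by omega) ha hb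
  obtain ⟨i, rfl⟩ := prefix_single hp hlen
  obtain ⟨-, h1, h2⟩ := S.valid_of_append hu
  exact ⟨i, h1, h2, rfl⟩

lemma star_eq_of_length {u ρ : List ℕ} (hu : ValidWord S.n u) (hρ : ValidWord S.n ρ)
    (hlen : u.length = ρ.length) (ha : S.aStar ρ ≤ S.aStar u)
    (hb : S.bStar u ≤ S.bStar ρ) : u = ρ := by
  have hp := S.star_subset_prefix hu hρ (by omega) ha hb
  exact (hp.eq_of_length hlen.symm).symm

lemma star_pair {u v : List ℕ} (hu : ValidWord S.n u) (hv : ValidWord S.n v)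
    (hlen : u.length = v.length) (h : S.aStar u < S.bStar v) :
    S.aStar u ≤ S.aStar v ∧ S.bStar u ≤ S.bStar v := by
  rcases eq_or_ne u v with rfl | hne
  · exact ⟨le_rfl, le_rfl⟩
  · have hnp1 : ¬ u <+: v := fun hp => hne (hp.eq_of_length hlen)
    have hnp2 : ¬ v <+: u := fun hp => hne (hp.eq_of_length hlen.symm).symm
    have hau := S.a_le_aStar u
    have hav := S.a_le_aStar v
    have hbu := S.bStar_le_b u
    have hbv := S.bStar_le_b v
    have h1 := S.aStar_lt_bStar hu
    have h2 := S.aStar_lt_bStar hv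
    rcases S.order_of_ne hu hv hnp1 hnp2 with hor | hor
    · constructor <;> linarith
    · exfalso; linarith

lemma exists_mem_E {σ : List ℕ} (h : ValidWord S.n σ) :
    ∃ x ∈ S.E, x ∈ Set.Icc (S.a σ) (S.b σ) := by
  set w : ℕ → List ℕ := fun m => σ ++ List.replicate m 1 with hw
  have hwsucc : ∀ m, w (m + 1) = w m ++ [1] := by
    intro m
    simp only [hw, List.replicate_succ']
    rw [← List.append_assoc]
  have hwlen : ∀ m, (w m).length = σ.length + m := by intro m; simp [hw]
  have hwvalid : ∀ m, ValidWord S.n (w m) := by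
    intro m
    induction m with
    | zero => simpa [hw] using h
    | succ m ih =>
      rw [hwsucc]
      exact S.valid_append ih le_rfl (S.n_pos _)
  have hnest : ∀ m, Set.Icc (S.a (w (m + 1))) (S.b (w (m + 1))) ⊆
      Set.Icc (S.a (w m)) (S.b (w m)) := by
    intro m
    rw [hwsucc]
    exact S.struct.sub (w m) (hwvalid m) 1 le_rfl (S.n_pos _)
  have hchain : ∀ m m', m ≤ m' → Set.Icc (S.a (w m')) (S.b (w m')) ⊆
      Set.Icc (S.a (w m)) (S.b (w m)) := by
    intro m m' hmm
    induction m' with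
    | zero => have : m = 0 := by omega
              subst this; exact subset_rfl
    | succ m' ih =>
      rcases Nat.lt_or_ge m (m' + 1) with hlt | hge
      · exact (hnest m').trans (ih (by omega))
      · have : m = m' + 1 := by omega
        subst this; exact subset_rfl
  have hmem : ∀ m, S.a (w m) ∈ Set.Icc (S.a (w m)) (S.b (w m)) :=
    fun m => ⟨le_rfl, (S.len_pos (hwvalid m)).le⟩
  have hbdd : BddAbove (Set.range fun m => S.a (w m)) := by
    refine ⟨S.b σ, ?_⟩
    rintro y ⟨m, rfl⟩
    have : S.a (w m) ∈ Set.Icc (S.a (w 0)) (S.b (w 0)) := hchain 0 m (Nat.zero_le _) (hmem m)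
    simpa [hw] using this.2
  set x := ⨆ m, S.a (w m) with hx
  have hx1 : ∀ m, S.a (w m) ≤ x := fun m => le_ciSup hbdd m
  have hx2 : ∀ m, x ≤ S.b (w m) := by
    intro m
    apply ciSup_le
    intro m'
    rcases le_total m m' with hmm | hmm
    · exact (hchain m m' hmm (hmem m')).2
    · have h1 : S.a (w m) ∈ Set.Icc (S.a (w m')) (S.b (w m')) := hchain m' m hmm (hmem m)
      exact le_trans h1.1 (S.len_pos (hwvalid m)).le
  have hxI : ∀ m, x ∈ Set.Icc (S.a (w m)) (S.b (w m)) := fun m => ⟨hx1 m, hx2 m⟩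
  refine ⟨x, ?_, by simpa [hw] using hxI 0⟩
  rw [HPS.E]
  apply Set.mem_iInter.mpr
  intro t
  rw [HPS.Ek]
  apply Set.mem_iUnion₂.mpr
  refine ⟨(w t).take t, ⟨?_, S.valid_take (hwvalid t) t⟩, ?_⟩
  · rw [List.length_take, hwlen]; omega
  · exact S.subset_take (hwvalid t) t (by rw [hwlen]; omega) (hxI t)

lemma exists_inner {σ : List ℕ} (h : ValidWord S.n σ) :
    ∃ x ∈ S.E, S.aStar σ < x ∧ x < S.bStar σ := by
  set w := σ ++ [1] with hwdef
  have hwv : ValidWord S.n w := S.valid_append h le_rfl (S.n_pos _)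
  have hwlen : w.length = σ.length + 1 := by simp [hwdef]
  set N2 := S.n (σ.length + 2) with hN2
  have hN2' : N2 = S.n (w.length + 1) := by rw [hwlen]
  have hN2two : 2 ≤ N2 := by rw [hN2']; exact S.n_two _
  have hv2 : ValidWord S.n (w ++ [N2]) := S.valid_append hwv (by omega) (by omega)
  obtain ⟨x, hxE, hxI⟩ := S.exists_mem_E hv2
  refine ⟨x, hxE, ?_, ?_⟩
  · -- lower bound
    have h1 : S.b (w ++ [1]) ≤ S.a (w ++ [N2]) :=
      S.sibling_le hwv le_rfl (by omega) (by omega)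
    have h2 : S.a (w ++ [1]) < S.b (w ++ [1]) :=
      S.len_pos (S.valid_append hwv le_rfl (by rw [← hN2']; omega))
    have h3 : S.a w ≤ S.a (w ++ [1]) := by
      have := S.struct.gap0 w hwv
      have hxi := S.hξ (w.length + 1) (Nat.succ_le_succ (Nat.zero_le _)) 0 (Nat.zero_le _)
      linarith
    have h4 : S.aStar σ = S.a w := S.aStar_eq h
    linarith [hxI.1]
  · -- upper bound
    have h1 : S.b (w ++ [N2]) ≤ S.b w := by
      have := S.struct.gapn w hwv
      have hxi := S.hξ (w.length + 1) (Nat.succ_le_succ (Nat.zero_le _))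
        (S.n (w.length + 1)) le_rfl
      rw [← hN2'] at this hxi
      linarith
    have h2 : S.b w ≤ S.a (σ ++ [S.n (σ.length + 1)]) :=
      S.sibling_le h le_rfl (by have := S.n_two σ.length; omega) le_rfl
    have h3 : S.a (σ ++ [S.n (σ.length + 1)]) < S.b (σ ++ [S.n (σ.length + 1)]) :=
      S.len_pos (S.valid_append h (S.n_pos _) le_rfl)
    have h4 : S.bStar σ = S.b (σ ++ [S.n (σ.length + 1)]) := S.bStar_eq h
    linarith [hxI.2]


lemma xiStar_mid {k l : ℕ} (hk : 1 ≤ k) (h1 : 1 ≤ l) (h2 : l ≤ S.n k - 1) :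
    S.xiStar k l = S.ξ k l + S.ξ (k + 1) 0 + S.ξ (k + 1) (S.n (k + 1)) := by
  have hnk := S.hn k hk
  rw [HPS.xiStar, if_neg (by omega), if_neg (by omega)]

lemma xiStar_mid_nonneg {k l : ℕ} (hk : 1 ≤ k) (h1 : 1 ≤ l) (h2 : l ≤ S.n k - 1) :
    0 ≤ S.xiStar k l := by
  have hnk := S.hn k hk
  rw [S.xiStar_mid hk h1 h2]
  have g1 := S.hξ k hk l (by omega)
  have g2 := S.hξ (k + 1) (by omega) 0 (Nat.zero_le _)
  have g3 := S.hξ (k + 1) (by omega) (S.n (k + 1)) le_rfl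
  linarith

lemma xiStar_image_nonempty {k : ℕ} (hk : 1 ≤ k) :
    ((fun l => S.xiStar k l) '' Set.Icc 1 (S.n k - 1)).Nonempty := by
  have hnk := S.hn k hk
  exact ⟨S.xiStar k 1, 1, ⟨le_rfl, by omega⟩, rfl⟩

lemma xiStar_image_finite (k : ℕ) :
    ((fun l => S.xiStar k l) '' Set.Icc 1 (S.n k - 1)).Finite :=
  (Set.finite_Icc _ _).image _

lemma alphaLo_le_xiStar {k l : ℕ} (h1 : 1 ≤ l) (h2 : l ≤ S.n k - 1) :
    S.alphaLo k ≤ S.xiStar k l :=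
  csInf_le (S.xiStar_image_finite k).bddBelow ⟨l, ⟨h1, h2⟩, rfl⟩

lemma xiStar_le_alphaHi {k l : ℕ} (h1 : 1 ≤ l) (h2 : l ≤ S.n k - 1) :
    S.xiStar k l ≤ S.alphaHi k :=
  le_csSup (S.xiStar_image_finite k).bddAbove ⟨l, ⟨h1, h2⟩, rfl⟩

lemma edge_le_alphaLo {k : ℕ} (hk : 1 ≤ k) :
    S.ξ (k + 1) 0 + S.ξ (k + 1) (S.n (k + 1)) ≤ S.alphaLo k := by
  apply le_csInf (S.xiStar_image_nonempty hk)
  rintro x ⟨l, ⟨hl1, hl2⟩, rfl⟩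
  dsimp only
  rw [S.xiStar_mid hk hl1 hl2]
  have := S.hξ k hk l (by have := S.hn k hk; omega)
  linarith

lemma alphaLo_le_alphaHi {k : ℕ} (hk : 1 ≤ k) : S.alphaLo k ≤ S.alphaHi k :=
  csInf_le_csSup (S.xiStar_image_nonempty hk) (S.xiStar_image_finite k).bddBelow
    (S.xiStar_image_finite k).bddAbove

lemma alphaLo_nonneg {k : ℕ} (hk : 1 ≤ k) : 0 ≤ S.alphaLo k := by
  apply le_csInf (S.xiStar_image_nonempty hk)
  rintro x ⟨l, ⟨hl1, hl2⟩, rfl⟩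
  exact S.xiStar_mid_nonneg hk hl1 hl2


lemma alphaHi_nonneg {k : ℕ} (hk : 1 ≤ k) : 0 ≤ S.alphaHi k :=
  le_trans (S.alphaLo_nonneg hk) (S.alphaLo_le_alphaHi hk)

lemma alphaHi_le_chi_alphaLo {χ : ℝ} (hχ : 1 ≤ χ) (hgap : GapComparable S χ)
    {k : ℕ} (hk : 1 ≤ k) : S.alphaHi k ≤ χ * S.alphaLo k := by
  have hχ0 : 0 < χ := by linarith
  apply csSup_le (S.xiStar_image_nonempty hk)
  rintro x ⟨l, ⟨hl1, hl2⟩, rfl⟩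
  dsimp only
  rw [← div_le_iff₀' hχ0]
  apply le_csInf (S.xiStar_image_nonempty hk)
  rintro y ⟨l', ⟨hl1', hl2'⟩, rfl⟩
  dsimp only
  rw [div_le_iff₀' hχ0]
  rw [S.xiStar_mid hk hl1 hl2, S.xiStar_mid hk hl1' hl2']
  have h1 := hgap k hk l l' hl1 hl2 hl1' hl2'
  have g2 := S.hξ (k + 1) (by omega) 0 (Nat.zero_le _)
  have g3 := S.hξ (k + 1) (by omega) (S.n (k + 1)) le_rfl
  nlinarith

lemma mIdx_mono (χ : ℝ) {k k' : ℕ} (h : k ≤ k') : S.mIdx χ k ≤ S.mIdx χ k' := by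
  unfold HPS.mIdx
  apply Finset.sum_le_sum_of_subset
  intro x hx
  simp only [Finset.mem_Icc] at hx ⊢
  omega

lemma kOf_eq (χ : ℝ) {k j : ℕ} (hk : 1 ≤ k) (hj1 : S.mIdx χ (k - 1) ≤ j)
    (hj2 : j < S.mIdx χ k) : S.kOf χ (j + 1) = k := by
  have hmem : k ∈ {k' | j + 1 ≤ S.mIdx χ k'} := by
    simp only [Set.mem_setOf_eq]; omega
  have h1 : S.kOf χ (j + 1) ≤ k := Nat.sInf_le hmem
  have h2 : S.kOf χ (j + 1) ∈ {k' | j + 1 ≤ S.mIdx χ k'} :=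
    Nat.sInf_mem (⟨k, hmem⟩ : {k' | j + 1 ≤ S.mIdx χ k'}.Nonempty)
  simp only [Set.mem_setOf_eq] at h2
  by_contra hne
  have hlt : S.kOf χ (j + 1) ≤ k - 1 := by omega
  have := S.mIdx_mono χ hlt
  omega

lemma star_lt_of_index {ρ : List ℕ} (hρ : ValidWord S.n ρ) {l l' : ℕ} (h1 : 1 ≤ l)
    (hll : l < l') (h2 : l' ≤ S.n (ρ.length + 1)) :
    S.bStar (ρ ++ [l]) ≤ S.aStar (ρ ++ [l']) :=
  le_trans (S.bStar_le_b _) (le_trans (S.sibling_le hρ h1 hll h2) (S.a_le_aStar _))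

lemma gap_exact {ρ : List ℕ} (hρ : ValidWord S.n ρ) {l : ℕ} (h1 : 1 ≤ l)
    (h2 : l + 1 ≤ S.n (ρ.length + 1)) :
    S.aStar (ρ ++ [l + 1]) - S.bStar (ρ ++ [l]) = S.xiStar (ρ.length + 1) l := by
  have hg := S.struct.gapl ρ hρ l h1 h2
  have hxm := S.xiStar_mid (k := ρ.length + 1) (l := l) (by omega) h1 (by omega)
  have ha : S.aStar (ρ ++ [l + 1]) = S.a (ρ ++ [l + 1]) + S.ξ (ρ.length + 2) 0 := by
    rw [HPS.aStar]; simp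
  have hb : S.bStar (ρ ++ [l]) =
      S.b (ρ ++ [l]) - S.ξ (ρ.length + 2) (S.n (ρ.length + 2)) := by
    rw [HPS.bStar]; simp
  rw [ha, hb, hxm]
  have e1 : ρ.length + 1 + 1 = ρ.length + 2 := by omega
  rw [e1]
  linarith
end HPS
end Helpers

section Telescope

lemma telescope_aux (G : ℝ) (hG : 0 ≤ G) (C : Finset (ℝ × ℝ))
    (hlen : ∀ p ∈ C, p.1 < p.2)
    (hord : ∀ p ∈ C, ∀ q ∈ C, p ≠ q → p.2 ≤ q.1 ∨ q.2 ≤ p.1)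
    (hadj : ∀ p ∈ C, ∀ q ∈ C, p.2 ≤ q.1 →
      (∀ r ∈ C, ¬ (p.2 ≤ r.1 ∧ r.2 ≤ q.1)) → q.1 - p.2 ≤ G) :
    ∀ p ∈ C, ∀ q ∈ C, q.2 - p.1 ≤ (∑ r ∈ C, (r.2 - r.1)) + ((C.card : ℝ) - 1) * G := by
  induction C using Finset.strongInduction with
  | _ C ih =>
  intro p hp q hq
  obtain ⟨p₀, hp₀, hmax⟩ := Finset.exists_max_image C (fun r => r.2) ⟨p, hp⟩
  have hrightmost : ∀ r ∈ C, r ≠ p₀ → r.2 ≤ p₀.1 := by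
    intro r hr hne
    rcases hord r hr p₀ hp₀ hne with h | h
    · exact h
    · exfalso
      have h1 := hlen r hr
      have h2 := hmax r hr
      have h3 := hlen p₀ hp₀
      linarith
  have hcard1 : 1 ≤ C.card := Finset.card_pos.mpr ⟨p, hp⟩
  have hsum_ge : ∀ r ∈ C, r.2 - r.1 ≤ ∑ r ∈ C, (r.2 - r.1) := by
    intro r hr
    exact Finset.single_le_sum (f := fun r : ℝ × ℝ => r.2 - r.1)
      (fun i hi => (sub_pos.mpr (hlen i hi)).le) hr
  rcases eq_or_ne p p₀ with rfl | hne
  · have h1 := hsum_ge p hp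
    have h2 := hmax q hq
    have h3 : (0:ℝ) ≤ ((C.card : ℝ) - 1) * G := by
      apply mul_nonneg _ hG
      have : (1:ℝ) ≤ (C.card : ℝ) := by exact_mod_cast hcard1
      linarith
    linarith
  · set C' := C.erase p₀ with hC'
    have hpC' : p ∈ C' := Finset.mem_erase.mpr ⟨hne, hp⟩
    have hC'ne : C'.Nonempty := ⟨p, hpC'⟩
    obtain ⟨q₀, hq₀, hmax'⟩ := Finset.exists_max_image C' (fun r => r.2) hC'ne
    have hq₀C : q₀ ∈ C := Finset.mem_of_mem_erase hq₀
    have hq₀ne : q₀ ≠ p₀ := (Finset.mem_erase.mp hq₀).1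
    have hgap : p₀.1 - q₀.2 ≤ G := by
      have h1 : q₀.2 ≤ p₀.1 := hrightmost q₀ hq₀C hq₀ne
      have := hadj q₀ hq₀C p₀ hp₀ h1 ?_
      · linarith
      · intro r hr ⟨hr1, hr2⟩
        have hrne : r ≠ p₀ := by
          intro h; subst h
          have := hlen r hr; linarith
        have hrC' : r ∈ C' := Finset.mem_erase.mpr ⟨hrne, hr⟩
        have := hmax' r hrC'
        have := hlen r hr
        linarith
    have hsub : C' ⊂ C := Finset.erase_ssubset hp₀
    have hIH := ih C' hsub (fun r hr => hlen r (Finset.mem_of_mem_erase hr))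
      (fun r hr s hs hne => hord r (Finset.mem_of_mem_erase hr) s (Finset.mem_of_mem_erase hs) hne)
      ?_ p hpC' q₀ hq₀
    · have hsum : ∑ r ∈ C, (r.2 - r.1) = (p₀.2 - p₀.1) + ∑ r ∈ C', (r.2 - r.1) :=
        (Finset.add_sum_erase C _ hp₀).symm
      have hcard : (C'.card : ℝ) = (C.card : ℝ) - 1 := by
        rw [hC', Finset.card_erase_of_mem hp₀]
        have : (1:ℝ) ≤ (C.card : ℝ) := by exact_mod_cast hcard1
        push_cast [Nat.cast_sub hcard1]
        ring
      have h2 := hmax q hq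
      have h3 := hlen p₀ hp₀
      rw [hcard] at hIH
      rw [hsum]
      linarith
    · intro r hr s hs hrs hno
      apply hadj r (Finset.mem_of_mem_erase hr) s (Finset.mem_of_mem_erase hs) hrs
      intro t ht ⟨ht1, ht2⟩
      rcases eq_or_ne t p₀ with rfl | htne
      · have h1 := hmax s (Finset.mem_of_mem_erase hs)
        have h2 := hlen s (Finset.mem_of_mem_erase hs)
        linarith
      · exact hno t (Finset.mem_erase.mpr ⟨htne, ht⟩) ⟨ht1, ht2⟩

end Telescope

section BranchHelpers

namespace BranchSeq

variable {S : HPS} {χ : ℝ} (B : BranchSeq S χ)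

lemma mem_children {m : ℕ} {p q : ℝ × ℝ} :
    q ∈ B.children m p ↔ q ∈ B.Br (m + 1) ∧ p.1 ≤ q.1 ∧ q.2 ≤ p.2 := by
  classical
  rw [children]
  simp [Finset.mem_filter]

lemma branch_order {m : ℕ} {p q : ℝ × ℝ} (hp : p ∈ B.Br m) (hq : q ∈ B.Br m)
    (hne : p ≠ q) : p.2 ≤ q.1 ∨ q.2 ≤ p.1 := by
  by_contra hcon
  push_neg at hcon
  obtain ⟨h1, h2⟩ := hcon
  have hd := B.disj m p hp q hq hne
  have hp' := B.lt m p hp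
  have hq' := B.lt m q hq
  set z := (max p.1 q.1 + min p.2 q.2) / 2 with hz
  have hmaxmin : max p.1 q.1 < min p.2 q.2 := by
    rcases max_cases p.1 q.1 with ⟨hm, _⟩ | ⟨hm, _⟩ <;> rcases min_cases p.2 q.2 with ⟨hn, _⟩ | ⟨hn, _⟩ <;>
      rw [hm, hn] <;> linarith
  have hz1 : max p.1 q.1 < z := by rw [hz]; linarith
  have hz2 : z < min p.2 q.2 := by rw [hz]; linarith
  have : z ∈ Set.Ioo p.1 p.2 ∩ Set.Ioo q.1 q.2 := by
    constructor
    · exact ⟨lt_of_le_of_lt (le_max_left _ _) hz1, lt_of_lt_of_le hz2 (min_le_left _ _)⟩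
    · exact ⟨lt_of_le_of_lt (le_max_right _ _) hz1, lt_of_lt_of_le hz2 (min_le_right _ _)⟩
  rw [hd] at this
  exact this

lemma eq_of_touch {m : ℕ} {p q : ℝ × ℝ} (hp : p ∈ B.Br m) (hq : q ∈ B.Br m)
    {y : ℝ} (h1 : p.1 < y) (h2 : y < p.2) (h3 : q.1 ≤ y) (h4 : y ≤ q.2) : q = p := by
  by_contra hne
  have hq' := B.lt m q hq
  rcases B.branch_order hp hq (fun h => hne h.symm) with h | h <;> linarith

lemma descend {m₀ : ℕ} : ∀ (d : ℕ) (p : ℝ × ℝ), p ∈ B.Br (m₀ + d) →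
    ∃ p' ∈ B.Br m₀, Set.Icc p.1 p.2 ⊆ Set.Icc p'.1 p'.2 := by
  intro d
  induction d with
  | zero => exact fun p hp => ⟨p, hp, subset_rfl⟩
  | succ d ih =>
    intro p hp
    obtain ⟨p', hp', hsub⟩ := B.nested (m₀ + d) p hp
    obtain ⟨p'', hp'', hsub'⟩ := ih p' hp'
    exact ⟨p'', hp'', hsub.trans hsub'⟩

lemma mem_child_of_mem_E {j : ℕ} {P : ℝ × ℝ} (hP : P ∈ B.Br j) {x : ℝ}
    (hx : x ∈ S.E) (h1 : P.1 < x) (h2 : x < P.2) :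
    ∃ r ∈ B.children j P, r.1 ≤ x ∧ x ≤ r.2 := by
  rw [B.interE] at hx
  have hx' := Set.mem_iInter.mp hx (j + 1)
  obtain ⟨R, hR, hxR⟩ := Set.mem_iUnion₂.mp hx'
  obtain ⟨P', hP', hsub⟩ := B.nested j R hR
  have hPP : P' = P := by
    have hxP' : x ∈ Set.Icc P'.1 P'.2 := hsub hxR
    exact B.eq_of_touch hP hP' h1 h2 hxP'.1 hxP'.2
  subst hPP
  have hR2 := B.lt (j + 1) R hR
  have hRP : P'.1 ≤ R.1 ∧ R.2 ≤ P'.2 := by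
    have ha := hsub ⟨le_rfl, hR2.le⟩
    have hb := hsub ⟨hR2.le, le_rfl⟩
    exact ⟨ha.1, hb.2⟩
  exact ⟨R, B.mem_children.mpr ⟨hR, hRP.1, hRP.2⟩, hxR.1, hxR.2⟩

lemma child_words {k j : ℕ} (hk : 1 ≤ k) (hj1 : S.mIdx χ (k - 1) ≤ j)
    (hj2 : j < S.mIdx χ k) {q : ℝ × ℝ} (hq : q ∈ B.Br (j + 1)) :
    ∃ σ τ : List ℕ, σ.length = k ∧ τ.length = k ∧ ValidWord S.n σ ∧ ValidWord S.n τ ∧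
      q.1 = S.aStar σ ∧ q.2 = S.bStar τ := by
  rcases lt_or_eq_of_le (Nat.succ_le_of_lt hj2) with hlt | heq
  · exact B.hull k hk (j + 1) (by omega) hlt q hq
  · have hq' : q ∈ (B.Br (S.mIdx χ k) : Set (ℝ × ℝ)) := by
      rw [← heq]; exact hq
    rw [B.levels k] at hq'
    obtain ⟨σ, hσl, hσv, hqs⟩ := hq'
    exact ⟨σ, σ, hσl, hσl, hσv, hσv, by rw [hqs], by rw [hqs]⟩

lemma parent_word {k j : ℕ} (hk : 1 ≤ k) (hj1 : S.mIdx χ (k - 1) ≤ j)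
    {P : ℝ × ℝ} (hP : P ∈ B.Br j) :
    ∃ ρ : List ℕ, ρ.length = k - 1 ∧ ValidWord S.n ρ ∧
      Set.Icc P.1 P.2 ⊆ Set.Icc (S.aStar ρ) (S.bStar ρ) := by
  have hj' : j = S.mIdx χ (k - 1) + (j - S.mIdx χ (k - 1)) := by omega
  rw [hj'] at hP
  obtain ⟨p', hp', hsub⟩ := B.descend _ P hP
  have hp'' : p' ∈ (B.Br (S.mIdx χ (k - 1)) : Set (ℝ × ℝ)) := hp'
  rw [B.levels (k - 1)] at hp''
  obtain ⟨ρ, hρl, hρv, hps⟩ := hp''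
  exact ⟨ρ, hρl, hρv, by rw [hps] at hsub; exact hsub⟩


lemma child_sibling {k j : ℕ} (hk : 1 ≤ k) (hj1 : S.mIdx χ (k - 1) ≤ j)
    (hj2 : j < S.mIdx χ k) {P : ℝ × ℝ} (hP : P ∈ B.Br j) {ρ : List ℕ}
    (hρl : ρ.length = k - 1) (hρv : ValidWord S.n ρ)
    (hPsub : Set.Icc P.1 P.2 ⊆ Set.Icc (S.aStar ρ) (S.bStar ρ))
    {q : ℝ × ℝ} (hq : q ∈ B.children j P) :
    ∃ l l' : ℕ, 1 ≤ l ∧ l ≤ S.n (ρ.length + 1) ∧ 1 ≤ l' ∧ l' ≤ S.n (ρ.length + 1) ∧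
      l ≤ l' ∧ q.1 = S.aStar (ρ ++ [l]) ∧ q.2 = S.bStar (ρ ++ [l']) := by
  obtain ⟨hqBr, hq1, hq2⟩ := B.mem_children.mp hq
  obtain ⟨σ, τ, hσl, hτl, hσv, hτv, hqa, hqb⟩ := B.child_words hk hj1 hj2 hqBr
  have hqlt := B.lt (j + 1) q hqBr
  have hpair := S.star_pair hσv hτv (by omega) (by rw [← hqa, ← hqb]; exact hqlt)
  have hPlt := B.lt j P hP
  have hsubρ1 : S.aStar ρ ≤ P.1 := (hPsub ⟨le_rfl, hPlt.le⟩).1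
  have hsubρ2 : P.2 ≤ S.bStar ρ := (hPsub ⟨hPlt.le, le_rfl⟩).2
  have hσd := S.parent_decomp hσv hρv (by omega)
    (by rw [← hqa]; linarith) (le_trans hpair.2 (by rw [← hqb] at *; linarith))
  obtain ⟨l, hl1, hl2, hσe⟩ := hσd
  have hτd := S.parent_decomp hτv hρv (by omega)
    (le_trans (by rw [← hqa] at *; linarith : S.aStar ρ ≤ S.aStar σ) hpair.1)
    (by rw [← hqb]; linarith)
  obtain ⟨l', hl1', hl2', hτe⟩ := hτd
  refine ⟨l, l', hl1, hl2, hl1', hl2', ?_, by rw [hqa, hσe], by rw [hqb, hτe]⟩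
  by_contra hcon
  push_neg at hcon
  have horder := S.star_lt_of_index hρv hl1' hcon hl2
  have h1 := S.aStar_lt_bStar (S.valid_append hρv hl1 hl2)
  have h2 := S.aStar_lt_bStar (S.valid_append hρv hl1' hl2')
  rw [hσe] at hqa
  rw [hτe] at hqb
  rw [hqa, hqb] at hqlt
  linarith

lemma gap_bound {k j : ℕ} (hk : 1 ≤ k) (hj1 : S.mIdx χ (k - 1) ≤ j)
    (hj2 : j < S.mIdx χ k) {P : ℝ × ℝ} (hP : P ∈ B.Br j) {ρ : List ℕ}
    (hρl : ρ.length = k - 1) (hρv : ValidWord S.n ρ)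
    (hPsub : Set.Icc P.1 P.2 ⊆ Set.Icc (S.aStar ρ) (S.bStar ρ))
    {p q : ℝ × ℝ} (hp : p ∈ B.children j P) (hq : q ∈ B.children j P)
    (hpq : p.2 ≤ q.1) (hno : ∀ r ∈ B.children j P, ¬ (p.2 ≤ r.1 ∧ r.2 ≤ q.1)) :
    q.1 - p.2 ≤ S.alphaHi k := by
  obtain ⟨lp, l, _, _, hl1, hl2, _, hpa, hpb⟩ :=
    B.child_sibling hk hj1 hj2 hP hρl hρv hPsub hp
  obtain ⟨l', lq', hl1', hl2', hlq1, hlq2, hlll, hqa, hqb⟩ :=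
    B.child_sibling hk hj1 hj2 hP hρl hρv hPsub hq
  have hkk : ρ.length + 1 = k := by omega
  have hll' : l < l' := by
    by_contra hcon
    push_neg at hcon
    rcases eq_or_lt_of_le hcon with rfl | hlt
    · have := S.aStar_lt_bStar (S.valid_append hρv hl1 hl2)
      rw [hpb, hqa] at hpq
      linarith
    · have horder := S.star_lt_of_index hρv hl1' hlt hl2
      have h1 := S.aStar_lt_bStar (S.valid_append hρv hl1 hl2)
      have h2 := S.aStar_lt_bStar (S.valid_append hρv hl1' hl2')
      rw [hpb, hqa] at hpq
      linarith
  rcases eq_or_lt_of_le (Nat.succ_le_of_lt hll') with heq | hlt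
  · -- adjacent siblings: the gap is exactly ξ*_{k,l}
    rw [hpb, hqa, ← heq]
    have := S.gap_exact hρv hl1 (by omega)
    rw [this, hkk]
    exact S.xiStar_le_alphaHi (by omega) (by
      have hnk : S.n k ≥ 2 := S.hn k hk
      rw [← hkk]
      omega)
  · -- non-adjacent: find a point of E in the open gap, contradiction
    exfalso
    have hv' : ValidWord S.n (ρ ++ [l + 1]) := S.valid_append hρv (by omega) (by omega)
    obtain ⟨x, hxE, hx1, hx2⟩ := S.exists_inner hv'
    have hgapx1 : p.2 < x := by
      have := S.star_lt_of_index hρv hl1 (Nat.lt_succ_self l) (by omega)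
      rw [hpb]; linarith
    have hgapx2 : x < q.1 := by
      have := S.star_lt_of_index hρv (by omega) hlt hl2'
      rw [hqa]; linarith
    obtain ⟨_, hp1, hp2⟩ := B.mem_children.mp hp
    obtain ⟨_, hq1, hq2⟩ := B.mem_children.mp hq
    have hplt := B.lt (j + 1) p (B.mem_children.mp hp).1
    have hqlt := B.lt (j + 1) q (B.mem_children.mp hq).1
    obtain ⟨r, hr, hr1, hr2⟩ := B.mem_child_of_mem_E hP hxE
      (by linarith) (by linarith)
    have hrBr := (B.mem_children.mp hr).1
    have hrlt := B.lt (j + 1) r hrBr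
    apply hno r hr
    constructor
    · rcases eq_or_ne r p with rfl | hne
      · linarith
      · rcases B.branch_order (B.mem_children.mp hp).1 hrBr (fun h => hne h.symm) with h | h
        · exact h
        · linarith
    · rcases eq_or_ne r q with rfl | hne
      · linarith
      · rcases B.branch_order (B.mem_children.mp hq).1 hrBr (fun h => hne h.symm) with h | h
        · linarith
        · exact h

lemma left_bound {k j : ℕ} (hk : 1 ≤ k) (hj1 : S.mIdx χ (k - 1) ≤ j)
    (hj2 : j < S.mIdx χ k) {P : ℝ × ℝ} (hP : P ∈ B.Br j) {ρ : List ℕ}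
    (hρl : ρ.length = k - 1) (hρv : ValidWord S.n ρ)
    (hPsub : Set.Icc P.1 P.2 ⊆ Set.Icc (S.aStar ρ) (S.bStar ρ))
    {cL : ℝ × ℝ} (hcL : cL ∈ B.children j P)
    (hmin : ∀ r ∈ B.children j P, cL.1 ≤ r.1) :
    cL.1 ≤ P.1 + S.ξ (k + 1) 0 := by
  have hkk : ρ.length + 1 = k := by omega
  have hPlt := B.lt j P hP
  obtain ⟨hcBr, hc1, hc2⟩ := B.mem_children.mp hcL
  have hclt := B.lt (j + 1) cL hcBr
  have hnoE : ∀ x ∈ S.E, ¬ (P.1 < x ∧ x < cL.1) := by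
    rintro x hx ⟨h1, h2⟩
    obtain ⟨r, hr, hr1, hr2⟩ := B.mem_child_of_mem_E hP hx h1 (by linarith)
    have := hmin r hr
    linarith
  obtain ⟨lA, lA', hlA1, hlA2, _, _, _, hca, _⟩ :=
    B.child_sibling hk hj1 hj2 hP hρl hρv hPsub hcL
  have hξ0 : 0 ≤ S.ξ (k + 1) 0 := S.hξ (k + 1) (by omega) 0 (Nat.zero_le _)
  rcases eq_or_lt_of_le hj1 with heq | hlt
  · -- P is itself a trimmed basic interval I_ρ'*
    have hP' : P ∈ (B.Br (S.mIdx χ (k - 1)) : Set (ℝ × ℝ)) := by rw [heq]; exact hP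
    rw [B.levels (k - 1)] at hP'
    obtain ⟨ρ', hρ'l, hρ'v, hPe⟩ := hP'
    have hPa : P.1 = S.aStar ρ' := by rw [hPe]
    have hPb : P.2 = S.bStar ρ' := by rw [hPe]
    have hρeq : ρ' = ρ := by
      apply S.star_eq_of_length hρ'v hρv (by omega)
      · rw [← hPa]; exact (hPsub ⟨le_rfl, hPlt.le⟩).1
      · rw [← hPb]; exact (hPsub ⟨hPlt.le, le_rfl⟩).2
    subst hρeq
    have hPa1 : P.1 = S.a (ρ' ++ [1]) := by rw [hPa, S.aStar_eq hρv]
    rcases eq_or_lt_of_le hlA1 with h1A | h1A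
    · -- leftmost child starts at a (ρ ++ [1]) + ξ_{k+1,0}
      rw [hca, ← h1A]
      have : S.aStar (ρ' ++ [1]) = S.a (ρ' ++ [1]) + S.ξ (k + 1) 0 := by
        rw [HPS.aStar]
        have : (ρ' ++ [1]).length + 1 = k + 1 := by simp; omega
        rw [this]
      rw [this, hPa1]
    · exfalso
      have hv1 : ValidWord S.n (ρ' ++ [1]) := S.valid_append hρv le_rfl (S.n_pos _)
      obtain ⟨x, hxE, hx1, hx2⟩ := S.exists_inner hv1
      apply hnoE x hxE
      constructor
      · calc P.1 = S.a (ρ' ++ [1]) := hPa1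
          _ ≤ S.aStar (ρ' ++ [1]) := S.a_le_aStar _
          _ < x := hx1
      · calc x < S.bStar (ρ' ++ [1]) := hx2
          _ ≤ S.aStar (ρ' ++ [lA]) := S.star_lt_of_index hρv le_rfl h1A hlA2
          _ = cL.1 := hca.symm
  · -- P is a hull branch: its left endpoint is the left endpoint of a trimmed interval
    obtain ⟨σ₀, τ₀, hσ₀l, hτ₀l, hσ₀v, hτ₀v, hPa, hPb⟩ := B.hull k hk j hlt hj2 P hP
    have hpair := S.star_pair hσ₀v hτ₀v (by omega) (by rw [← hPa, ← hPb]; exact hPlt)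
    obtain ⟨l₀, hl₀1, hl₀2, hσ₀e⟩ := S.parent_decomp hσ₀v hρv (by omega)
      (by rw [← hPa]; exact (hPsub ⟨le_rfl, hPlt.le⟩).1)
      (le_trans hpair.2 (by rw [← hPb]; exact (hPsub ⟨hPlt.le, le_rfl⟩).2))
    have hmain : cL.1 ≤ P.1 := by
      by_contra hgt
      push_neg at hgt
      have hl₀lA : l₀ < lA := by
        by_contra hcon
        push_neg at hcon
        rcases eq_or_lt_of_le hcon with rfl | hlt'
        · rw [hca, ← hσ₀e, ← hPa] at hgt
          exact lt_irrefl _ hgt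
        · have := S.star_lt_of_index hρv hlA1 hlt' hl₀2
          have h2 := S.aStar_lt_bStar (S.valid_append hρv hlA1 hlA2)
          rw [hca] at hgt
          rw [hPa, hσ₀e] at hgt
          linarith
      obtain ⟨x, hxE, hx1, hx2⟩ := S.exists_inner (hσ₀e ▸ hσ₀v)
      apply hnoE x hxE
      constructor
      · rw [hPa, hσ₀e]; exact hσ₀e ▸ hx1
      · calc x < S.bStar (ρ ++ [l₀]) := hσ₀e ▸ hx2
          _ ≤ S.aStar (ρ ++ [lA]) := S.star_lt_of_index hρv hl₀1 hl₀lA hlA2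
          _ = cL.1 := hca.symm
    linarith

lemma right_bound {k j : ℕ} (hk : 1 ≤ k) (hj1 : S.mIdx χ (k - 1) ≤ j)
    (hj2 : j < S.mIdx χ k) {P : ℝ × ℝ} (hP : P ∈ B.Br j) {ρ : List ℕ}
    (hρl : ρ.length = k - 1) (hρv : ValidWord S.n ρ)
    (hPsub : Set.Icc P.1 P.2 ⊆ Set.Icc (S.aStar ρ) (S.bStar ρ))
    {cR : ℝ × ℝ} (hcR : cR ∈ B.children j P)
    (hmax : ∀ r ∈ B.children j P, r.2 ≤ cR.2) :
    P.2 - S.ξ (k + 1) (S.n (k + 1)) ≤ cR.2 := by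
  have hkk : ρ.length + 1 = k := by omega
  have hPlt := B.lt j P hP
  obtain ⟨hcBr, hc1, hc2⟩ := B.mem_children.mp hcR
  have hclt := B.lt (j + 1) cR hcBr
  have hnoE : ∀ x ∈ S.E, ¬ (cR.2 < x ∧ x < P.2) := by
    rintro x hx ⟨h1, h2⟩
    obtain ⟨r, hr, hr1, hr2⟩ := B.mem_child_of_mem_E hP hx (by linarith) h2
    have := hmax r hr
    linarith
  obtain ⟨lB, lB', _, _, hlB1, hlB2, _, _, hcb⟩ :=
    B.child_sibling hk hj1 hj2 hP hρl hρv hPsub hcR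
  have hξn : 0 ≤ S.ξ (k + 1) (S.n (k + 1)) := S.hξ (k + 1) (by omega) _ le_rfl
  rcases eq_or_lt_of_le hj1 with heq | hlt
  · have hP' : P ∈ (B.Br (S.mIdx χ (k - 1)) : Set (ℝ × ℝ)) := by rw [heq]; exact hP
    rw [B.levels (k - 1)] at hP'
    obtain ⟨ρ', hρ'l, hρ'v, hPe⟩ := hP'
    have hPa : P.1 = S.aStar ρ' := by rw [hPe]
    have hPb : P.2 = S.bStar ρ' := by rw [hPe]
    have hρeq : ρ' = ρ := by
      apply S.star_eq_of_length hρ'v hρv (by omega)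
      · rw [← hPa]; exact (hPsub ⟨le_rfl, hPlt.le⟩).1
      · rw [← hPb]; exact (hPsub ⟨hPlt.le, le_rfl⟩).2
    subst hρeq
    have hnn : S.n (ρ'.length + 1) = S.n k := by rw [hkk]
    have hPb1 : P.2 = S.b (ρ' ++ [S.n (ρ'.length + 1)]) := by rw [hPb, S.bStar_eq hρv]
    rcases eq_or_lt_of_le hlB2 with hBn | hBn
    · rw [hcb, hBn]
      have : S.bStar (ρ' ++ [S.n (ρ'.length + 1)]) =
          S.b (ρ' ++ [S.n (ρ'.length + 1)]) - S.ξ (k + 1) (S.n (k + 1)) := by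
        rw [HPS.bStar]
        have h2 : (ρ' ++ [S.n (ρ'.length + 1)]).length + 1 = k + 1 := by simp; omega
        rw [h2]
      rw [this, hPb1]
    · exfalso
      have hvn : ValidWord S.n (ρ' ++ [S.n (ρ'.length + 1)]) :=
        S.valid_append hρv (S.n_pos _) le_rfl
      obtain ⟨x, hxE, hx1, hx2⟩ := S.exists_inner hvn
      apply hnoE x hxE
      constructor
      · calc cR.2 = S.bStar (ρ' ++ [lB']) := hcb
          _ ≤ S.aStar (ρ' ++ [S.n (ρ'.length + 1)]) := S.star_lt_of_index hρv hlB1 hBn le_rfl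
          _ < x := hx1
      · calc x < S.bStar (ρ' ++ [S.n (ρ'.length + 1)]) := hx2
          _ ≤ S.b (ρ' ++ [S.n (ρ'.length + 1)]) := S.bStar_le_b _
          _ = P.2 := hPb1.symm
  · obtain ⟨σ₀, τ₀, hσ₀l, hτ₀l, hσ₀v, hτ₀v, hPa, hPb⟩ := B.hull k hk j hlt hj2 P hP
    have hpair := S.star_pair hσ₀v hτ₀v (by omega) (by rw [← hPa, ← hPb]; exact hPlt)
    obtain ⟨l₀, hl₀1, hl₀2, hτ₀e⟩ := S.parent_decomp hτ₀v hρv (by omega)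
      (le_trans (by rw [← hPa]; exact (hPsub ⟨le_rfl, hPlt.le⟩).1) hpair.1)
      (by rw [← hPb]; exact (hPsub ⟨hPlt.le, le_rfl⟩).2)
    have hmain : P.2 ≤ cR.2 := by
      by_contra hgt
      push_neg at hgt
      have hlBl₀ : lB' < l₀ := by
        by_contra hcon
        push_neg at hcon
        rcases eq_or_lt_of_le hcon with rfl | hlt'
        · rw [hcb, ← hτ₀e, ← hPb] at hgt
          exact lt_irrefl _ hgt
        · have := S.star_lt_of_index hρv hl₀1 hlt' hlB2
          have h2 := S.aStar_lt_bStar (S.valid_append hρv hlB1 hlB2)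
          rw [hcb] at hgt
          rw [hPb, hτ₀e] at hgt
          linarith
      obtain ⟨x, hxE, hx1, hx2⟩ := S.exists_inner (hτ₀e ▸ hτ₀v)
      apply hnoE x hxE
      constructor
      · calc cR.2 = S.bStar (ρ ++ [lB']) := hcb
          _ ≤ S.aStar (ρ ++ [l₀]) := S.star_lt_of_index hρv hlB1 hlBl₀ hl₀2
          _ < x := hτ₀e ▸ hx1
      · rw [hPb, hτ₀e]; exact hτ₀e ▸ hx2
    linarith

lemma main_estimate {k j : ℕ} (hk : 1 ≤ k) (hj1 : S.mIdx χ (k - 1) ≤ j)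
    (hj2 : j < S.mIdx χ k) {P : ℝ × ℝ} (hP : P ∈ B.Br j)
    (hCne : (B.children j P).Nonempty) :
    P.2 - P.1 ≤ S.ξ (k + 1) 0 + S.ξ (k + 1) (S.n (k + 1)) +
      (∑ r ∈ B.children j P, (r.2 - r.1)) +
      (((B.children j P).card : ℝ) - 1) * S.alphaHi k := by
  obtain ⟨ρ, hρl, hρv, hPsub⟩ := B.parent_word hk hj1 hP
  obtain ⟨cL, hcL, hminL⟩ := Finset.exists_min_image (B.children j P) (fun r => r.1) hCne
  obtain ⟨cR, hcR, hmaxR⟩ := Finset.exists_max_image (B.children j P) (fun r => r.2) hCne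
  have hLB := B.left_bound hk hj1 hj2 hP hρl hρv hPsub hcL hminL
  have hRB := B.right_bound hk hj1 hj2 hP hρl hρv hPsub hcR hmaxR
  have htel := telescope_aux (S.alphaHi k) (S.alphaHi_nonneg hk) (B.children j P)
    (fun r hr => B.lt (j + 1) r (B.mem_children.mp hr).1)
    (fun p hp q hq hne => B.branch_order (B.mem_children.mp hp).1
      (B.mem_children.mp hq).1 hne)
    (fun p hp q hq hpq hno => B.gap_bound hk hj1 hj2 hP hρl hρv hPsub hp hq hpq hno)
    cL hcL cR hcR
  linarith
end BranchSeq

end BranchHelpers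




/-- **(5.12).** For `m_{k-1} ≤ j < m_k` with `γ(j+1) ≤ ε`, `ε ∈ (0, 1/(2M²χ²))`, every branch
`I'` of `H_{j+1}` contained in a branch `I` of `H_j` satisfies
`|I'|/|I| ≥ (1 - 2χ²M²ε)/(2χM²)`. -/
theorem child_parent_ratio_lower_bound
    (S : HPS) (χ : ℝ) (hχ : 1 ≤ χ) (hgap : GapComparable S χ)
    (B : BranchSeq S χ)
    (k j : ℕ) (hk : 1 ≤ k) (hj1 : S.mIdx χ (k - 1) ≤ j) (hj2 : j < S.mIdx χ k)
    (ε : ℝ) (hε : 0 < ε) (hε' : ε < 1 / (2 * (Mconst χ : ℝ) ^ 2 * χ ^ 2))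
    (hγ : B.gam (j + 1) ≤ ε)
    (P Q : ℝ × ℝ) (hP : P ∈ B.Br j) (hQ : Q ∈ B.Br (j + 1))
    (hsub : Set.Icc Q.1 Q.2 ⊆ Set.Icc P.1 P.2) :
    (1 - 2 * χ ^ 2 * (Mconst χ : ℝ) ^ 2 * ε) / (2 * χ * (Mconst χ : ℝ) ^ 2) ≤
      (Q.2 - Q.1) / (P.2 - P.1) := by
  have hχ0 : (0:ℝ) < χ := by linarith
  have hM1 : (1:ℝ) ≤ (Mconst χ : ℝ) := by
    have : 1 ≤ Mconst χ := Nat.succ_le_succ (Nat.zero_le _)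
    exact_mod_cast this
  have hM0 : (0:ℝ) < (Mconst χ : ℝ) ^ 2 := by positivity
  have hPpos : 0 < P.2 - P.1 := sub_pos.mpr (B.lt j P hP)
  have hQpos : 0 < Q.2 - Q.1 := sub_pos.mpr (B.lt (j + 1) Q hQ)
  -- Q is a child of P
  have hQC : Q ∈ B.children j P := by
    apply B.mem_children.mpr
    refine ⟨hQ, ?_, ?_⟩
    · exact (hsub ⟨le_rfl, (B.lt (j + 1) Q hQ).le⟩).1
    · exact (hsub ⟨(B.lt (j + 1) Q hQ).le, le_rfl⟩).2
  have hCne : (B.children j P).Nonempty := ⟨Q, hQC⟩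
  -- the number of children is at most M²
  have hcard : ((B.children j P).card : ℝ) ≤ (Mconst χ : ℝ) ^ 2 := by
    have hset : (↑(B.children j P) : Set (ℝ × ℝ)) =
        {q ∈ (B.Br (j + 1) : Set (ℝ × ℝ)) | Set.Icc q.1 q.2 ⊆ Set.Icc P.1 P.2} := by
      ext r
      simp only [Finset.mem_coe, Set.mem_setOf_eq, B.mem_children]
      constructor
      · rintro ⟨h1, h2, h3⟩
        exact ⟨h1, Set.Icc_subset_Icc h2 h3⟩
      · rintro ⟨h1, h2⟩
        have hrlt := B.lt (j + 1) r h1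
        rw [Set.Icc_subset_Icc_iff hrlt.le] at h2
        exact ⟨h1, h2.1, h2.2⟩
    have h1 : (B.children j P).card =
        {q ∈ (B.Br (j + 1) : Set (ℝ × ℝ)) | Set.Icc q.1 q.2 ⊆ Set.Icc P.1 P.2}.ncard := by
      rw [← hset, Set.ncard_coe_finset]
    have h2 := B.card_le j P hP
    rw [← h1] at h2
    calc ((B.children j P).card : ℝ) ≤ ((Mconst χ) ^ 2 : ℕ) := by exact_mod_cast h2
      _ = (Mconst χ : ℝ) ^ 2 := by push_cast; ring
  -- each child has length at most 2χ|Q|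
  have hsumle : (∑ r ∈ B.children j P, (r.2 - r.1)) ≤
      ((B.children j P).card : ℝ) * (2 * χ * (Q.2 - Q.1)) := by
    have := Finset.sum_le_card_nsmul (B.children j P) (fun r => r.2 - r.1)
      (2 * χ * (Q.2 - Q.1))
      (fun r hr => B.comparable (j + 1) r (B.mem_children.mp hr).1 Q hQ)
    rwa [nsmul_eq_mul] at this
  -- the main geometric estimate
  have hmain := B.main_estimate hk hj1 hj2 hP hCne
  -- γ(j+1) ≤ ε gives α̲*_k ≤ ε · maxLen j ≤ 2χε|P|
  have hγ' : S.alphaLo k / B.maxLen j ≤ ε := by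
    have h := hγ
    rw [BranchSeq.gam, S.kOf_eq χ hk hj1 hj2, Nat.add_sub_cancel] at h
    exact h
  have himgne : ((fun p : ℝ × ℝ => p.2 - p.1) '' ↑(B.Br j)).Nonempty :=
    ⟨P.2 - P.1, P, hP, rfl⟩
  have himgfin : ((fun p : ℝ × ℝ => p.2 - p.1) '' ↑(B.Br j)).Finite :=
    ((B.Br j).finite_toSet).image _
  have hmaxpos : 0 < B.maxLen j :=
    lt_of_lt_of_le hPpos (le_csSup himgfin.bddAbove ⟨P, hP, rfl⟩)
  have hmaxub : B.maxLen j ≤ 2 * χ * (P.2 - P.1) := by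
    apply csSup_le himgne
    rintro y ⟨r, hr, rfl⟩
    exact B.comparable j r hr P hP
  have hLo : S.alphaLo k ≤ ε * B.maxLen j := (div_le_iff₀ hmaxpos).mp hγ'
  have hHiLo : S.alphaHi k ≤ χ * S.alphaLo k := S.alphaHi_le_chi_alphaLo hχ hgap hk
  have hHi0 : 0 ≤ S.alphaHi k := S.alphaHi_nonneg hk
  have hedge : S.ξ (k + 1) 0 + S.ξ (k + 1) (S.n (k + 1)) ≤ S.alphaHi k :=
    le_trans (S.edge_le_alphaLo hk) (S.alphaLo_le_alphaHi hk)
  have hcard1 : (1:ℝ) ≤ ((B.children j P).card : ℝ) := by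
    have : 1 ≤ (B.children j P).card := Finset.card_pos.mpr hCne
    exact_mod_cast this
  -- combine: |P| ≤ 2χM²|Q| + M²·α̅*, α̅* ≤ 2χ²ε|P|
  have hkey : P.2 - P.1 ≤ (Mconst χ : ℝ) ^ 2 * (2 * χ * (Q.2 - Q.1)) +
      (Mconst χ : ℝ) ^ 2 * S.alphaHi k := by
    have h1 : (∑ r ∈ B.children j P, (r.2 - r.1)) ≤
        (Mconst χ : ℝ) ^ 2 * (2 * χ * (Q.2 - Q.1)) := by
      apply le_trans hsumle
      apply mul_le_mul_of_nonneg_right hcard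
      positivity
    have h2 : (((B.children j P).card : ℝ) - 1) * S.alphaHi k ≤
        ((Mconst χ : ℝ) ^ 2 - 1) * S.alphaHi k := by
      apply mul_le_mul_of_nonneg_right _ hHi0
      linarith
    nlinarith
  have hHi2 : S.alphaHi k ≤ 2 * χ ^ 2 * ε * (P.2 - P.1) := by
    calc S.alphaHi k ≤ χ * S.alphaLo k := hHiLo
      _ ≤ χ * (ε * B.maxLen j) := by
          apply mul_le_mul_of_nonneg_left hLo hχ0.le
      _ ≤ χ * (ε * (2 * χ * (P.2 - P.1))) := by
          apply mul_le_mul_of_nonneg_left _ hχ0.le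
          exact mul_le_mul_of_nonneg_left hmaxub hε.le
      _ = 2 * χ ^ 2 * ε * (P.2 - P.1) := by ring
  rw [div_le_div_iff₀ (by positivity) hPpos]
  nlinarith [mul_le_mul_of_nonneg_left hHi2 hM0.le]
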